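/- Let C be an arrovian voting system on at least three alternatives, let K be the minimal decisive subset and J the minimal strongly decisive subset of I. Then for every profile (P_1,...,P_n), the aggregate satisfies ⋂_{j ∈ J} P_j ⊆ C(P_1,...,P_n) ⊆ ⋂_{k ∈ K} P_k. Moreover, C equals the Pareto rule C_J (defined by C_J(P) = ⋂_{j∈J} P_j) if and only if K = J. -/

import Mathlib

variable {A I : Type*}

/-- A partial preorder: a reflexive and transitive binary relation. -/
def IsPPO (P : A → A → Prop) : Prop := Reflexive P ∧ Transitive P

/-- A linear (total) preorder: reflexive, transitive and complete. -/
def IsLPO (P : A → A → Prop) : Prop := Reflexive P ∧ Transitive P ∧ ∀ a b, P a b ∨ P b a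

/-- A profile of partial preorders. -/
def IsPPOProfile (P : I → A → A → Prop) : Prop := ∀ i, IsPPO (P i)

/-- A profile of linear (total) preorders. -/
def IsLPOProfile (P : I → A → A → Prop) : Prop := ∀ i, IsLPO (P i)

/-- Strict preference. -/
def StrictPref (P : A → A → Prop) (a b : A) : Prop := P a b ∧ ¬ P b a

/-- Indifference. -/
def Indiff (P : A → A → Prop) (a b : A) : Prop := P a b ∧ P b a

/-- The set `A` contains at least three distinct alternatives. -/
def ThreeAlts (A : Type*) : Prop := ∃ a b c : A, a ≠ b ∧ b ≠ c ∧ a ≠ c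

/-- Unanimity. -/
def Unanimity (C : (I → A → A → Prop) → A → A → Prop) : Prop :=
  ∀ P, IsPPOProfile P → ∀ a b : A, (∀ i, P i a b) → C P a b

/-- Independence of irrelevant alternatives. -/
def IIA (C : (I → A → A → Prop) → A → A → Prop) : Prop :=
  ∀ P P' : I → A → A → Prop, IsPPOProfile P → IsPPOProfile P' → ∀ a b : A,
    {i | P i a b} = {i | P' i a b} → {i | P i b a} = {i | P' i b a} →
    (C P a b ↔ C P' a b)

/-- Neutrality: `C (ρ*P) = ρ*(C P)` for every permutation `ρ` of the alternatives. -/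
def Neutrality (C : (I → A → A → Prop) → A → A → Prop) : Prop :=
  ∀ (ρ : Equiv.Perm A) (P : I → A → A → Prop), IsPPOProfile P →
    ∀ x y : A, C (fun i a b => P i (ρ.symm a) (ρ.symm b)) x y ↔ C P (ρ.symm x) (ρ.symm y)

/-- Monotonicity. -/
def Monotonicity (C : (I → A → A → Prop) → A → A → Prop) : Prop :=
  ∀ P P' : I → A → A → Prop, IsPPOProfile P → IsPPOProfile P' → ∀ a b : A,
    {i | P i a b} ⊆ {i | P' i a b} → {i | P' i b a} ⊆ {i | P i b a} →
    C P a b → C P' a b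

/-- `J` is a decisive set: unanimous strict preference on `J` forces weak aggregate preference. -/
def Decisive (C : (I → A → A → Prop) → A → A → Prop) (J : Set I) : Prop :=
  ∀ P, IsPPOProfile P → ∀ a b : A, (∀ j ∈ J, StrictPref (P j) a b) → C P a b

/-- `J` is a strongly decisive set: unanimous weak preference on `J` forces weak aggregate preference. -/
def SDecisive (C : (I → A → A → Prop) → A → A → Prop) (J : Set I) : Prop :=
  ∀ P, IsPPOProfile P → ∀ a b : A, (∀ j ∈ J, P j a b) → C P a b


/-! By IIA, the aggregate comparison of `x` with `y` depends only on the pattern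
`({i | x ≽ᵢ y}, {i | y ≽ᵢ x})`, and transitivity of the aggregate along a third alternative `z`,
placed strictly by the decisive set `K` relative to `x` or `y`, carries forced patterns from one
pair to another. The lower inclusion is strong decisiveness of `J`. For the upper one, suppose
`a ≽ b` in the aggregate with pattern `(U, V)` while some `k ∈ K` has `k ∉ U`: the pattern
`(U, V \ U)` then spreads to every ordered pair, and one more step through a third alternative
shows that `K \ {k}` is already decisive, against the minimality of `K`. If `C` is the Pareto rule
of `J`, a profile in which exactly the members of `K` rank `p` above `q` gives `J ⊆ K`; and
`K ⊆ J` always, strongly decisive sets being decisive. -/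

def tripleProfile (x y z : A) (Sxy Syx Sxz Szx Syz Szy : Set I) : I → A → A → Prop :=
  fun i u v => u = v ∨ (u = x ∧ v = y ∧ i ∈ Sxy) ∨ (u = y ∧ v = x ∧ i ∈ Syx) ∨
    (u = x ∧ v = z ∧ i ∈ Sxz) ∨ (u = z ∧ v = x ∧ i ∈ Szx) ∨
    (u = y ∧ v = z ∧ i ∈ Syz) ∨ (u = z ∧ v = y ∧ i ∈ Szy)

section tripleProfile

variable {x y z : A} {Sxy Syx Sxz Szx Syz Szy : Set I}

theorem tripleProfile_isPPOProfile (hxyz : Sxy ∩ Syz ⊆ Sxz) (hyzx : Syz ∩ Szx ⊆ Syx)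
    (hxzy : Sxz ∩ Szy ⊆ Sxy) (hzxy : Szx ∩ Sxy ⊆ Szy) (hyxz : Syx ∩ Sxz ⊆ Syz)
    (hzyx : Szy ∩ Syx ⊆ Szx) :
    IsPPOProfile (tripleProfile x y z Sxy Syx Sxz Szx Syz Szy) := by
  refine fun i => ⟨fun _ => Or.inl rfl, fun u v w huv hvw => ?_⟩
  rcases huv with rfl | ⟨rfl, rfl, h⟩ | ⟨rfl, rfl, h⟩ | ⟨rfl, rfl, h⟩ | ⟨rfl, rfl, h⟩ |
      ⟨rfl, rfl, h⟩ | ⟨rfl, rfl, h⟩ <;>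
    rcases hvw with rfl | ⟨e, rfl, h'⟩ | ⟨e, rfl, h'⟩ | ⟨e, rfl, h'⟩ | ⟨e, rfl, h'⟩ |
      ⟨e, rfl, h'⟩ | ⟨e, rfl, h'⟩ <;>
    simp_all [tripleProfile, Set.subset_def]

theorem setOf_tripleProfile_xy (hxy : x ≠ y) (hxz : x ≠ z) (hyz : y ≠ z) :
    {i | tripleProfile x y z Sxy Syx Sxz Szx Syz Szy i x y} = Sxy := by
  ext; simp [tripleProfile, hxy, hxz, hyz, hxy.symm]

theorem setOf_tripleProfile_yx (hxy : x ≠ y) (hxz : x ≠ z) (hyz : y ≠ z) :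
    {i | tripleProfile x y z Sxy Syx Sxz Szx Syz Szy i y x} = Syx := by
  ext; simp [tripleProfile, hxy, hxz, hyz, hxy.symm]

theorem setOf_tripleProfile_xz (hxy : x ≠ y) (hxz : x ≠ z) (hyz : y ≠ z) :
    {i | tripleProfile x y z Sxy Syx Sxz Szx Syz Szy i x z} = Sxz := by
  ext; simp [tripleProfile, hxy, hxz, hxz.symm, hyz.symm]

theorem setOf_tripleProfile_zx (hxy : x ≠ y) (hxz : x ≠ z) (hyz : y ≠ z) :
    {i | tripleProfile x y z Sxy Syx Sxz Szx Syz Szy i z x} = Szx := by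
  ext; simp [tripleProfile, hxy, hxz, hxz.symm, hyz.symm]

theorem setOf_tripleProfile_yz (hxy : x ≠ y) (hxz : x ≠ z) (hyz : y ≠ z) :
    {i | tripleProfile x y z Sxy Syx Sxz Szx Syz Szy i y z} = Syz := by
  ext; simp [tripleProfile, hyz, hxy.symm, hxz.symm, hyz.symm]

theorem setOf_tripleProfile_zy (hxy : x ≠ y) (hxz : x ≠ z) (hyz : y ≠ z) :
    {i | tripleProfile x y z Sxy Syx Sxz Szx Syz Szy i z y} = Szy := by
  ext; simp [tripleProfile, hyz, hxy.symm, hxz.symm, hyz.symm]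

end tripleProfile

theorem ThreeAlts.exists_ne_ne (hA : ThreeAlts A) (a b : A) : ∃ c, c ≠ a ∧ c ≠ b := by
  obtain ⟨p, q, r, hpq, hqr, hpr⟩ := hA
  by_contra! h
  rcases eq_or_ne p a with rfl | hpa
  · exact hqr ((h q hpq.symm).trans (h r hpr.symm).symm)
  rcases eq_or_ne q a with rfl | hqa
  · exact hpr ((h p hpa).trans (h r hqr.symm).symm)
  · exact hpq ((h p hpa).trans (h q hqa).symm)

def PatternForces (C : (I → A → A → Prop) → A → A → Prop) (x y : A) (S T : Set I) : Prop :=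
  ∀ Q, IsPPOProfile Q → {i | Q i x y} = S → {i | Q i y x} = T → C Q x y

section PatternForces

variable {C : (I → A → A → Prop) → A → A → Prop} {K : Set I} {x y z : A}

theorem patternForces_of_pref (hIIA : IIA C) {P : I → A → A → Prop} (hP : IsPPOProfile P)
    (h : C P x y) : PatternForces C x y {i | P i x y} {i | P i y x} :=
  fun Q hQ hxy hyx => (hIIA P Q hP hQ x y hxy.symm hyx.symm).mp h

theorem Decisive.patternForces (hK : Decisive C K) {S T : Set I} (hKS : K ⊆ S)
    (hKT : Disjoint K T) : PatternForces C x y S T := by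
  rintro Q hQ rfl rfl
  exact hK Q hQ x y fun i hi => ⟨hKS hi, Set.disjoint_left.1 hKT hi⟩

theorem SDecisive.decisive {J : Set I} (hJ : SDecisive C J) : Decisive C J :=
  fun P hP a b hab => hJ P hP a b fun j hj => (hab j hj).1

theorem PatternForces.trans (hC : ∀ P, IsPPOProfile P → IsPPO (C P)) (hIIA : IIA C)
    (hxy : x ≠ y) (hxz : x ≠ z) (hyz : y ≠ z) {Sxy Syx Sxz Szx Syz Szy : Set I}
    (h₁ : PatternForces C x y Sxy Syx) (h₂ : PatternForces C y z Syz Szy)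
    (hxyz : Sxy ∩ Syz ⊆ Sxz) (hyzx : Syz ∩ Szx ⊆ Syx) (hxzy : Sxz ∩ Szy ⊆ Sxy)
    (hzxy : Szx ∩ Sxy ⊆ Szy) (hyxz : Syx ∩ Sxz ⊆ Syz) (hzyx : Szy ∩ Syx ⊆ Szx) :
    PatternForces C x z Sxz Szx := by
  intro Q hQ hQxz hQzx
  set T := tripleProfile x y z Sxy Syx Sxz Szx Syz Szy
  have hT : IsPPOProfile T := tripleProfile_isPPOProfile hxyz hyzx hxzy hzxy hyxz hzyx
  have hCT : C T x z := (hC T hT).2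
    (h₁ T hT (setOf_tripleProfile_xy hxy hxz hyz) (setOf_tripleProfile_yx hxy hxz hyz))
    (h₂ T hT (setOf_tripleProfile_yz hxy hxz hyz) (setOf_tripleProfile_zy hxy hxz hyz))
  exact (hIIA T Q hT hQ x z ((setOf_tripleProfile_xz hxy hxz hyz).trans hQxz.symm)
    ((setOf_tripleProfile_zx hxy hxz hyz).trans hQzx.symm)).mp hCT

/-- Every member of `K` ranks the new alternative `z` strictly below `y` (strictly above `x` in
`move_fst`), so `y ≽ z` is forced by decisiveness of `K` and `x ≽ z` by transitivity. -/
theorem PatternForces.move_snd (hC : ∀ P, IsPPOProfile P → IsPPO (C P)) (hIIA : IIA C)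
    (hK : Decisive C K) (hxy : x ≠ y) (hxz : x ≠ z) (hyz : y ≠ z) {U W S T : Set I}
    (h : PatternForces C x y U W) (hUS : K ∩ U ⊆ S) (hTW : K ∩ T ⊆ W \ U) :
    PatternForces C x z S T := by
  refine h.trans hC hIIA hxy hxz hyz (hK.patternForces (S := K ∪ (W ∩ S)) (T := T ∩ U)
      Set.subset_union_left ?_) ?_ ?_ ?_ ?_ ?_ ?_
  · exact Set.disjoint_left.2 fun i hiK hi => (hTW ⟨hiK, hi.1⟩).2 hi.2
  · rintro i ⟨hiU, hiK | hiWS⟩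
    exacts [hUS ⟨hiK, hiU⟩, hiWS.2]
  · rintro i ⟨hiK | hiWS, hiT⟩
    exacts [(hTW ⟨hiK, hiT⟩).1, hiWS.1]
  · exact fun i hi => hi.2.2
  · exact fun i hi => hi
  · exact fun i hi => Or.inr hi
  · exact fun i hi => hi.1.1

theorem PatternForces.move_fst (hC : ∀ P, IsPPOProfile P → IsPPO (C P)) (hIIA : IIA C)
    (hK : Decisive C K) (hxy : x ≠ y) (hxz : x ≠ z) (hyz : y ≠ z) {U W S T : Set I}
    (h : PatternForces C x y U W) (hUS : K ∩ U ⊆ S) (hTW : K ∩ T ⊆ W \ U) :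
    PatternForces C z y S T := by
  refine PatternForces.trans hC hIIA hxz.symm hyz.symm hxy
    (hK.patternForces (S := K ∪ (S ∩ W)) (T := U ∩ T) Set.subset_union_left ?_) h
    ?_ ?_ ?_ ?_ ?_ ?_
  · exact Set.disjoint_left.2 fun i hiK hi => (hTW ⟨hiK, hi.2⟩).2 hi.1
  · rintro i ⟨hiK | hiSW, hiU⟩
    exacts [hUS ⟨hiK, hiU⟩, hiSW.1]
  · exact fun i hi => hi
  · exact fun i hi => Or.inr hi
  · rintro i ⟨hiT, hiK | hiSW⟩
    exacts [(hTW ⟨hiK, hiT⟩).1, hiSW.2]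
  · exact fun i hi => hi.1.1
  · exact fun i hi => hi.2.2

theorem PatternForces.forall_of_disjoint (hA : ThreeAlts A)
    (hC : ∀ P, IsPPOProfile P → IsPPO (C P)) (hIIA : IIA C) (hK : Decisive C K)
    {U W : Set I} (hUW : Disjoint U W) {a b : A} (hab : a ≠ b) (h : PatternForces C a b U W) :
    ∀ x y, x ≠ y → PatternForces C x y U W := by
  have hWU : K ∩ W ⊆ W \ U := fun i hi => ⟨hi.2, Set.disjoint_right.1 hUW hi.2⟩
  have replace_snd {x y z : A} (h : PatternForces C x y U W) (hxy : x ≠ y) (hzx : z ≠ x) :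
      PatternForces C x z U W := by
    rcases eq_or_ne z y with rfl | hzy
    exacts [h, h.move_snd hC hIIA hK hxy hzx.symm hzy.symm Set.inter_subset_right hWU]
  have replace_fst {x y z : A} (h : PatternForces C x y U W) (hxy : x ≠ y) (hzy : z ≠ y) :
      PatternForces C z y U W := by
    rcases eq_or_ne z x with rfl | hzx
    exacts [h, h.move_fst hC hIIA hK hxy hzx.symm hzy.symm Set.inter_subset_right hWU]
  intro x y hxy
  obtain ⟨c, hcb, hcy⟩ := hA.exists_ne_ne b y
  exact replace_fst (replace_snd (replace_fst h hab hcb) hcb hcy.symm) hcy hxy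

theorem Decisive.diff_singleton (hA : ThreeAlts A) (hC : ∀ P, IsPPOProfile P → IsPPO (C P))
    (hIIA : IIA C) (hK : Decisive C K) {U W : Set I}
    (hall : ∀ x y, x ≠ y → PatternForces C x y U W) {k : I} (hkU : k ∉ U) :
    Decisive C (K \ {k}) := by
  intro R hR x y hstr
  rcases eq_or_ne x y with rfl | hxy
  · exact (hC R hR).1 x
  obtain ⟨z, hzx, hzy⟩ := hA.exists_ne_ne x y
  -- voter `k` compares `z` with neither `x` nor `y`, so its ranking of `x` and `y` plays no role
  set S := {i | R i x y} \ {k}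
  set T := {i | R i y x} \ {k}
  have hUS : K ∩ U ⊆ S := fun i ⟨hiK, hiU⟩ =>
    have hik : i ≠ k := fun h => hkU (h ▸ hiU)
    ⟨(hstr i ⟨hiK, hik⟩).1, hik⟩
  have hTW : K ∩ T ⊆ W \ U := fun i ⟨hiK, hiT, hik⟩ => ((hstr i ⟨hiK, hik⟩).2 hiT).elim
  have hxz := (hall x y hxy).move_snd hC hIIA hK hxy hzx.symm hzy.symm hUS hTW
  have hzy' := (hall x y hxy).move_fst hC hIIA hK hxy hzx.symm hzy.symm hUS hTW
  refine hxz.trans hC hIIA hzx.symm hxy hzy hzy' ?_ ?_ ?_ ?_ ?_ ?_ R hR rfl rfl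
  · exact fun i hi => hi.1.1
  · exact fun i hi => ⟨hi.2, hi.1.2⟩
  · exact fun i hi => ⟨hi.1, hi.2.2⟩
  · exact fun i hi => ⟨hi.1, hi.2.2⟩
  · exact fun i hi => ⟨hi.2, hi.1.2⟩
  · exact fun i hi => hi.1.1

theorem pref_of_mem_minimal_decisive (hA : ThreeAlts A)
    (hC : ∀ P, IsPPOProfile P → IsPPO (C P)) (hIIA : IIA C) (hK : Decisive C K)
    (hKmin : ∀ K' : Set I, Decisive C K' → K ⊆ K') {P : I → A → A → Prop}
    (hP : IsPPOProfile P) {a b : A} (hab : C P a b) {k : I} (hk : k ∈ K) : P k a b := by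
  by_contra hka
  rcases eq_or_ne a b with rfl | hne
  · exact hka ((hP k).1 a)
  obtain ⟨c, hca, hcb⟩ := hA.exists_ne_ne a b
  have hac : PatternForces C a c {i | P i a b} ({i | P i b a} \ {i | P i a b}) :=
    (patternForces_of_pref hIIA hP hab).move_snd hC hIIA hK hne hca.symm hcb.symm
      Set.inter_subset_right fun i hi => hi.2
  have hall := hac.forall_of_disjoint hA hC hIIA hK Set.disjoint_sdiff_right hca.symm
  exact (hKmin _ (hK.diff_singleton hA hC hIIA hall hka) hk).2 rfl

theorem subset_of_decisive_of_forall_pref (hA : ThreeAlts A) (hK : Decisive C K) {J : Set I}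
    (hJ : ∀ P, IsPPOProfile P → ∀ a b, C P a b → ∀ j ∈ J, P j a b) : J ⊆ K := by
  obtain ⟨p, q, r, hpq, hqr, hpr⟩ := hA
  set T := tripleProfile p q r K ∅ ∅ ∅ ∅ ∅
  have hT : IsPPOProfile T := tripleProfile_isPPOProfile (by simp) (by simp) (by simp)
    (by simp) (by simp) (by simp)
  have hCT : C T p q := hK.patternForces subset_rfl (Set.disjoint_empty K) T hT
    (setOf_tripleProfile_xy hpq hpr hqr) (setOf_tripleProfile_yx hpq hpr hqr)
  exact fun j hj => (setOf_tripleProfile_xy hpq hpr hqr).subset (hJ T hT p q hCT j hj)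

end PatternForces

theorem pareto_sandwich_general (C : (I → A → A → Prop) → A → A → Prop)
    (hA : ThreeAlts A)
    (hC : ∀ P, IsPPOProfile P → IsPPO (C P))
    (hIIA : IIA C)
    (K J : Set I)
    (hK : Decisive C K ∧ ∀ K' : Set I, Decisive C K' → K ⊆ K')
    (hJ : SDecisive C J ∧ ∀ J' : Set I, SDecisive C J' → J ⊆ J') :
    (∀ P : I → A → A → Prop, IsPPOProfile P → ∀ a b : A,
      (∀ j ∈ J, P j a b) → C P a b) ∧
    (∀ P : I → A → A → Prop, IsPPOProfile P → ∀ a b : A,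
      C P a b → ∀ k ∈ K, P k a b) ∧
    ((∀ P : I → A → A → Prop, IsPPOProfile P → ∀ a b : A,
        C P a b ↔ ∀ j ∈ J, P j a b) ↔ K = J) := by
  obtain ⟨hKdec, hKmin⟩ := hK
  have veto : ∀ P : I → A → A → Prop, IsPPOProfile P → ∀ a b : A,
      C P a b → ∀ k ∈ K, P k a b :=
    fun P hP a b hab k hk => pref_of_mem_minimal_decisive hA hC hIIA hKdec hKmin hP hab hk
  refine ⟨hJ.1, veto, fun hCJ => ?_, fun hKJ P hP a b => ⟨fun h => hKJ ▸ veto P hP a b h,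
    hJ.1 P hP a b⟩⟩
  exact (hKmin J hJ.1.decisive).antisymm
    (subset_of_decisive_of_forall_pref hA hKdec fun P hP a b h => (hCJ P hP a b).1 h)

theorem pareto_sandwich [Fintype I] (C : (I → A → A → Prop) → A → A → Prop)
    (hA : ThreeAlts A)
    (hC : ∀ P, IsPPOProfile P → IsPPO (C P))
    (hU : Unanimity C) (hIIA : IIA C)
    (K J : Set I)
    (hK : Decisive C K ∧ ∀ K' : Set I, Decisive C K' → K ⊆ K')
    (hJ : SDecisive C J ∧ ∀ J' : Set I, SDecisive C J' → J ⊆ J') :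
    (∀ P : I → A → A → Prop, IsPPOProfile P → ∀ a b : A,
      (∀ j ∈ J, P j a b) → C P a b) ∧
    (∀ P : I → A → A → Prop, IsPPOProfile P → ∀ a b : A,
      C P a b → ∀ k ∈ K, P k a b) ∧
    ((∀ P : I → A → A → Prop, IsPPOProfile P → ∀ a b : A,
        C P a b ↔ ∀ j ∈ J, P j a b) ↔ K = J) :=
  pareto_sandwich_general C hA hC hIIA K J hK hJ
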